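/- arXiv:0709.0103 — 3 statements merged into one kernel-verified Lean document; each statement's English description precedes it below -/
import Mathlib

section
/- Let α ∈ ℝ and ω(ξ,μ) = ξ⁵ − αξ³ + μ²/ξ. For every (ξ,μ) ∈ ℝ² with ξ ≠ 0 and ξ² ≥ max(1,|α|), the gradient of ω satisfies √((5ξ⁴ − 3αξ² − μ²/ξ²)² + (2μ/ξ)²) ≥ ξ². -/
/-- The dispersion relation of the fifth order KP-I equation:
`ω(ξ,μ) = ξ⁵ − αξ³ + μ²/ξ`, whose gradient is
`(5ξ⁴ − 3αξ² − μ²/ξ², 2μ/ξ)`.  The fifth order dispersive smoothing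
estimate: for `ξ ≠ 0` with `ξ² ≥ max 1 |α|`, the norm of the gradient of
`ω` is at least `ξ²`. -/
theorem fifth_order_dispersive_smoothing (α : ℝ) :
    ∀ ξ μ : ℝ, ξ ≠ 0 → max 1 |α| ≤ ξ ^ 2 →
      ξ ^ 2 ≤ Real.sqrt ((5 * ξ ^ 4 - 3 * α * ξ ^ 2 - μ ^ 2 / ξ ^ 2) ^ 2
        + (2 * μ / ξ) ^ 2) := by
  intro ξ μ hξ h
  have h1 : (1:ℝ) ≤ ξ ^ 2 := le_trans (le_max_left _ _) h
  have ha : |α| ≤ ξ ^ 2 := le_trans (le_max_right _ _) h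
  obtain ⟨ha1, ha2⟩ := abs_le.mp ha
  have hsq : (0:ℝ) < ξ ^ 2 := by positivity
  have hB : (2 * μ / ξ) ^ 2 = 4 * (μ ^ 2 / ξ ^ 2) := by
    field_simp; ring
  have key : ξ ^ 2 * ξ ^ 2 ≤ (5 * ξ ^ 4 - 3 * α * ξ ^ 2 - μ ^ 2 / ξ ^ 2) ^ 2
      + 4 * (μ ^ 2 / ξ ^ 2) := by
    set t := μ ^ 2 / ξ ^ 2 with ht
    have ht0 : 0 ≤ t := by positivity
    set A := 5 * ξ ^ 4 - 3 * α * ξ ^ 2 - t with hA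
    rcases le_total (ξ ^ 2) A with hc | hc
    · nlinarith [mul_self_le_mul_self hsq.le hc]
    · nlinarith [sq_nonneg A, sq_nonneg (ξ ^ 2 - 1)]
  rw [hB]
  calc ξ ^ 2 = Real.sqrt ((ξ ^ 2) ^ 2) := by rw [Real.sqrt_sq hsq.le]
    _ ≤ _ := Real.sqrt_le_sqrt (by nlinarith [key])
end

section
/- Let α ∈ ℝ. For all ξ₁, ξ₂, μ₁, μ₂ ∈ ℝ with ξ₁ ≠ 0, ξ₂ ≠ 0 and ξ₁ + ξ₂ ≠ 0, the resonance function satisfies the identity R(ξ₁,ξ₂,μ₁,μ₂) = (ξ₁ξ₂/(ξ₁+ξ₂)) · ( (ξ₁+ξ₂)² · (5(ξ₁² + ξ₁ξ₂ + ξ₂²) − 3α) − (μ₁/ξ₁ − μ₂/ξ₂)² ). -/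
/-- The dispersion relation of the fifth order KP-I equation with parameter `α`:
`ω(ξ,μ) = ξ⁵ − αξ³ + μ²/ξ` (for `ξ ≠ 0`). -/
noncomputable def omega5 (α ξ μ : ℝ) : ℝ := ξ ^ 5 - α * ξ ^ 3 + μ ^ 2 / ξ

/-- The resonance function of the fifth order KP-I equation:
`R(ξ₁,ξ₂,μ₁,μ₂) = ω(ξ₁+ξ₂,μ₁+μ₂) − ω(ξ₁,μ₁) − ω(ξ₂,μ₂)`. -/
noncomputable def resonance5 (α ξ₁ ξ₂ μ₁ μ₂ : ℝ) : ℝ :=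
  omega5 α (ξ₁ + ξ₂) (μ₁ + μ₂) - omega5 α ξ₁ μ₁ - omega5 α ξ₂ μ₂

/-- The resonance function identity for the fifth order KP-I equation. -/
theorem resonance5_eq (α : ℝ) :
    ∀ ξ₁ ξ₂ μ₁ μ₂ : ℝ, ξ₁ ≠ 0 → ξ₂ ≠ 0 → ξ₁ + ξ₂ ≠ 0 →
      resonance5 α ξ₁ ξ₂ μ₁ μ₂ =
        (ξ₁ * ξ₂ / (ξ₁ + ξ₂)) *
          ((ξ₁ + ξ₂) ^ 2 * (5 * (ξ₁ ^ 2 + ξ₁ * ξ₂ + ξ₂ ^ 2) - 3 * α)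
            - (μ₁ / ξ₁ - μ₂ / ξ₂) ^ 2) := by
  intro ξ₁ ξ₂ μ₁ μ₂ h1 h2 h3
  unfold resonance5 omega5
  field_simp
  ring
end

section
/- Let ω₃(ξ,μ) = −ξ³ + μ²/ξ (the third order KP-II dispersion relation, α = 1). For all ξ₁, ξ₂, μ₁, μ₂ ∈ ℝ with ξ₁ ≠ 0, ξ₂ ≠ 0 and ξ₁ + ξ₂ ≠ 0, the resonance function satisfies |ω₃(ξ₁+ξ₂, μ₁+μ₂) − ω₃(ξ₁,μ₁) − ω₃(ξ₂,μ₂)| ≥ 3 |ξ₁| |ξ₂| |ξ₁+ξ₂|. -/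
/-- The dispersion relation of the third order KP-II equation:
`ω₃(ξ,μ) = −ξ³ + μ²/ξ` (for `ξ ≠ 0`). -/
noncomputable def omega3KP2 (ξ μ : ℝ) : ℝ := -ξ ^ 3 + μ ^ 2 / ξ

/-- For the third order KP-II equation the resonance function never
degenerates: `|R(ξ₁,ξ₂,μ₁,μ₂)| ≥ 3|ξ₁||ξ₂||ξ₁+ξ₂|`. -/
theorem resonance3KP2_lower_bound :
    ∀ ξ₁ ξ₂ μ₁ μ₂ : ℝ, ξ₁ ≠ 0 → ξ₂ ≠ 0 → ξ₁ + ξ₂ ≠ 0 →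
      3 * |ξ₁| * |ξ₂| * |ξ₁ + ξ₂| ≤
        |omega3KP2 (ξ₁ + ξ₂) (μ₁ + μ₂) - omega3KP2 ξ₁ μ₁ - omega3KP2 ξ₂ μ₂| := by
  intro ξ₁ ξ₂ μ₁ μ₂ h1 h2 h3
  set P := ξ₁ * ξ₂ * (ξ₁ + ξ₂) with hP
  have hPne : P ≠ 0 := by
    simp [hP, mul_ne_zero, h1, h2, h3]
  set q := ξ₂ * μ₁ - ξ₁ * μ₂ with hq
  have hkey : omega3KP2 (ξ₁ + ξ₂) (μ₁ + μ₂) - omega3KP2 ξ₁ μ₁ - omega3KP2 ξ₂ μ₂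
      = -(3 * P + q ^ 2 / P) := by
    simp only [omega3KP2, hP, hq]
    field_simp
    ring
  rw [hkey, abs_neg]
  have h3P : 3 * |ξ₁| * |ξ₂| * |ξ₁ + ξ₂| = |3 * P| := by
    rw [hP, abs_mul, abs_mul, abs_mul]
    norm_num [mul_assoc]
  rw [h3P]
  rcases lt_or_gt_of_ne hPne with hneg | hpos
  · have hle : 3 * P + q ^ 2 / P ≤ 3 * P := by
      have : q ^ 2 / P ≤ 0 := div_nonpos_of_nonneg_of_nonpos (sq_nonneg q) hneg.le
      linarith
    have h3Pneg : 3 * P < 0 := by linarith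
    rw [abs_of_neg h3Pneg, abs_of_neg (lt_of_le_of_lt hle h3Pneg)]
    linarith
  · have hge : 3 * P ≤ 3 * P + q ^ 2 / P := by
      have : 0 ≤ q ^ 2 / P := div_nonneg (sq_nonneg q) hpos.le
      linarith
    have h3Ppos : 0 < 3 * P := by linarith
    rw [abs_of_pos h3Ppos, abs_of_pos (lt_of_lt_of_le h3Ppos hge)]
    linarith
end
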